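/- arXiv:2002.03101 — 3 statements merged into one kernel-verified Lean document; each statement's English description precedes it below -/
import Mathlib

section
/- Let R be a unital ring with involution * and nontrivial symmetric idempotent e, and let Δ : R → R be a *-reverse derivable map with Δ(e) = 0. Then Δ maps R₁₂ = eR(1−e) into R₂₁ = (1−e)Re: for every x with x = ex(1−e) one has Δ(x) = (1−e)Δ(x)e. -/
def IsReverseDerivable {R : Type*} [Mul R] [Add R] (σ Δ : R → R) : Prop :=
  ∀ a b : R, Δ (a * b) = Δ b * σ a + σ b * Δ a

namespace IsReverseDerivable

variable {R : Type*} [Ring R] {σ Δ : R → R}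

theorem map_zero (hΔ : IsReverseDerivable σ Δ) (hσ0 : σ 0 = 0) : Δ 0 = 0 := by
  simpa [hσ0] using hΔ 0 0

theorem map_eq_map_mul_of_mul_left {e x : R} (hΔ : IsReverseDerivable σ Δ) (hΔe : Δ e = 0)
    (hes : σ e = e) (hex : e * x = x) : Δ x = Δ x * e := by
  simpa [hex, hes, hΔe] using hΔ e x

theorem mul_map_eq_zero_of_mul_right {e x : R} (hΔ : IsReverseDerivable σ Δ) (hσ0 : σ 0 = 0)
    (hΔe : Δ e = 0) (hes : σ e = e) (hxe : x * e = 0) : e * Δ x = 0 := by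
  simpa [hxe, hΔ.map_zero hσ0, hes, hΔe] using (hΔ x e).symm

end IsReverseDerivable

theorem IsIdempotentElem.mul_mul_one_sub_mul {R : Type*} [Ring R] {e : R}
    (he : IsIdempotentElem e) (x : R) : e * x * (1 - e) * e = 0 := by
  rw [mul_assoc, sub_mul, one_mul, he.eq, sub_self, mul_zero]

theorem IsIdempotentElem.mul_mul_mul_one_sub {R : Type*} [Ring R] {e : R}
    (he : IsIdempotentElem e) (x : R) : e * (e * x * (1 - e)) = e * x * (1 - e) := by
  rw [← mul_assoc, ← mul_assoc, he.eq]

theorem delta_maps_R12_to_R21_general {R : Type*} [Ring R]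
    (σ : R → R)
    (hσadd : ∀ x y : R, σ (x + y) = σ x + σ y)
    (e : R) (he : e * e = e) (hes : σ e = e)
    (Δ : R → R)
    (hΔ : ∀ a b : R, Δ (a * b) = Δ b * σ a + σ b * Δ a)
    (hΔe : Δ e = 0) :
    ∀ x : R, x = e * x * (1 - e) → Δ x = (1 - e) * Δ x * e := by
  intro x hx
  have hΔ : IsReverseDerivable σ Δ := hΔ
  have hσ0 : σ 0 = 0 := by simpa using hσadd 0 0
  have hex : e * x = x := by rw [hx, IsIdempotentElem.mul_mul_mul_one_sub he]
  have hxe : x * e = 0 := by rw [hx, IsIdempotentElem.mul_mul_one_sub_mul he]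
  calc Δ x = Δ x * e := hΔ.map_eq_map_mul_of_mul_left hΔe hes hex
    _ = (1 - e) * Δ x * e := by
      rw [sub_mul, one_mul, hΔ.mul_map_eq_zero_of_mul_right hσ0 hΔe hes hxe, sub_zero]

theorem delta_maps_R12_to_R21 {R : Type*} [Ring R]
    (σ : R → R)
    (hσadd : ∀ x y : R, σ (x + y) = σ x + σ y)
    (hσinv : ∀ x : R, σ (σ x) = x)
    (hσmul : ∀ x y : R, σ (x * y) = σ y * σ x)
    (e : R) (he : e * e = e) (hes : σ e = e) (he0 : e ≠ 0) (he1 : e ≠ 1)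
    (Δ : R → R)
    (hΔ : ∀ a b : R, Δ (a * b) = Δ b * σ a + σ b * Δ a)
    (hΔe : Δ e = 0) :
    ∀ x : R, x = e * x * (1 - e) → Δ x = (1 - e) * Δ x * e :=
  delta_maps_R12_to_R21_general σ hσadd e he hes Δ hΔ hΔe
end

section
/- Let R be a unital ring with involution * containing a nontrivial symmetric idempotent e, satisfying: (M2) eRx = 0 implies x = 0. Let Δ : R → R be a *-reverse derivable map with Δ(e) = 0. Then for all x₁₁ ∈ eRe and x₁₂ ∈ eR(1−e), Δ(x₁₁ + x₁₂) = Δ(x₁₁) + Δ(x₁₂). -/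
/-!
Split `Δ x` along `1 = e + (1 - e)`: applying the product rule to `x * e` and `x * (1 - e)` gives
`Δ x = Δ (x * e) + Δ (x * (1 - e)) - Δ (1 - e) * σ x`. For `x` with `x * e = x` or `x * e = 0` one of
the two products is `0`, which forces `Δ (1 - e) * σ x = 0`; this term is additive in `x`, so it also
vanishes on `x₁₁ + x₁₂`, and the splitting of `Δ (x₁₁ + x₁₂)` is exactly `Δ x₁₁ + Δ x₁₂`.
-/

section ReverseDerivable

variable {R : Type*} [Ring R] {σ : R → R} {Δ : R → R}

theorem map_one_of_involutive_of_antimultiplicative (hσinv : ∀ x, σ (σ x) = x)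
    (hσmul : ∀ x y, σ (x * y) = σ y * σ x) : σ 1 = 1 := by
  simpa [hσinv] using (hσmul (σ 1) 1).symm

theorem map_zero_of_reverse_derivable (hσ0 : σ 0 = 0)
    (hΔ : ∀ a b, Δ (a * b) = Δ b * σ a + σ b * Δ a) : Δ 0 = 0 := by
  simpa [hσ0] using hΔ 0 0

variable {e : R} (hΔ : ∀ a b, Δ (a * b) = Δ b * σ a + σ b * Δ a)
  (hes : σ e = e) (hσf : σ (1 - e) = 1 - e) (hΔe : Δ e = 0)
include hΔ hes hσf hΔe

theorem reverse_derivable_split (x : R) :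
    Δ (1 - e) * σ x = Δ (x * e) + Δ (x * (1 - e)) - Δ x := by
  rw [hΔ x e, hΔ x (1 - e), hes, hσf, hΔe]
  noncomm_ring

theorem mul_map_eq_zero_of_mul_eq_self (hΔ0 : Δ 0 = 0) {x : R} (hx : x * e = x) :
    Δ (1 - e) * σ x = 0 := by
  rw [reverse_derivable_split hΔ hes hσf hΔe, hx, mul_sub, mul_one, hx, sub_self, hΔ0]
  abel

theorem mul_map_eq_zero_of_mul_eq_zero (hΔ0 : Δ 0 = 0) {x : R} (hx : x * e = 0) :
    Δ (1 - e) * σ x = 0 := by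
  rw [reverse_derivable_split hΔ hes hσf hΔe, hx, mul_sub, mul_one, hx, sub_zero, hΔ0]
  abel

theorem map_add_of_mul_eq_self_of_mul_eq_zero (hσadd : ∀ x y, σ (x + y) = σ x + σ y)
    (hΔ0 : Δ 0 = 0) {x y : R} (hx : x * e = x) (hy : y * e = 0) :
    Δ (x + y) = Δ x + Δ y := by
  have hdefect : Δ (1 - e) * σ (x + y) = 0 := by
    rw [hσadd, mul_add, mul_map_eq_zero_of_mul_eq_self hΔ hes hσf hΔe hΔ0 hx,
      mul_map_eq_zero_of_mul_eq_zero hΔ hes hσf hΔe hΔ0 hy, add_zero]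
  have hsplit := reverse_derivable_split hΔ hes hσf hΔe (x + y)
  have hxe : (x + y) * e = x := by rw [add_mul, hx, hy, add_zero]
  have hxf : (x + y) * (1 - e) = y := by
    rw [mul_sub, mul_one, hxe, add_sub_cancel_left]
  rw [hdefect, hxe, hxf] at hsplit
  exact (sub_eq_zero.mp hsplit.symm).symm

end ReverseDerivable

theorem delta_additive_R11_R12_general {R : Type*} [Ring R]
    (σ : R → R)
    (hσadd : ∀ x y : R, σ (x + y) = σ x + σ y)
    (hσinv : ∀ x : R, σ (σ x) = x)
    (hσmul : ∀ x y : R, σ (x * y) = σ y * σ x)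
    (e : R) (he : e * e = e) (hes : σ e = e)
    (Δ : R → R)
    (hΔ : ∀ a b : R, Δ (a * b) = Δ b * σ a + σ b * Δ a)
    (hΔe : Δ e = 0) :
    ∀ x₁₁ x₁₂ : R, x₁₁ = e * x₁₁ * e → x₁₂ = e * x₁₂ * (1 - e) →
      Δ (x₁₁ + x₁₂) = Δ x₁₁ + Δ x₁₂ := by
  intro x₁₁ x₁₂ hx₁₁ hx₁₂
  have hσ0 : σ 0 = 0 := by simpa using hσadd 0 0
  have hσf : σ (1 - e) = 1 - e := by
    have h := hσadd (1 - e) e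
    rwa [sub_add_cancel, map_one_of_involutive_of_antimultiplicative hσinv hσmul, hes, eq_comm,
      ← eq_sub_iff_add_eq] at h
  have hx₁₁e : x₁₁ * e = x₁₁ := by rw [hx₁₁, mul_assoc, he]
  have hx₁₂e : x₁₂ * e = 0 := by rw [hx₁₂, mul_assoc, sub_mul, one_mul, he, sub_self, mul_zero]
  exact map_add_of_mul_eq_self_of_mul_eq_zero hΔ hes hσf hΔe hσadd
    (map_zero_of_reverse_derivable hσ0 hΔ) hx₁₁e hx₁₂e

theorem delta_additive_R11_R12 {R : Type*} [Ring R]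
    (σ : R → R)
    (hσadd : ∀ x y : R, σ (x + y) = σ x + σ y)
    (hσinv : ∀ x : R, σ (σ x) = x)
    (hσmul : ∀ x y : R, σ (x * y) = σ y * σ x)
    (e : R) (he : e * e = e) (hes : σ e = e) (he0 : e ≠ 0) (he1 : e ≠ 1)
    (hM2 : ∀ x : R, (∀ r : R, e * r * x = 0) → x = 0)
    (Δ : R → R)
    (hΔ : ∀ a b : R, Δ (a * b) = Δ b * σ a + σ b * Δ a)
    (hΔe : Δ e = 0) :
    ∀ x₁₁ x₁₂ : R, x₁₁ = e * x₁₁ * e → x₁₂ = e * x₁₂ * (1 - e) →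
      Δ (x₁₁ + x₁₂) = Δ x₁₁ + Δ x₁₂ :=
  delta_additive_R11_R12_general σ hσadd hσinv hσmul e he hes Δ hΔ hΔe
end

section
/- Let R be a unital ring with involution * containing a nontrivial symmetric idempotent e, satisfying: (M1) xR = 0 implies x = 0, and (M3) exe·R·(1−e) = 0 implies exe = 0. Let Δ : R → R be a *-reverse derivable map with Δ(e) = 0. Then Δ is additive on eRe: for all x₁₁, y₁₁ ∈ eRe, Δ(x₁₁ + y₁₁) = Δ(x₁₁) + Δ(y₁₁). -/
/-!
Write `f = 1 - e`. For `e b = 0` the difference `Δ (e + b) - Δ b` right-annihilates `e` and `fR`, hence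
vanishes by (M1); applied to `x ↦ Δ (x*)*` and `f` this also gives `Δ (f + a) = Δ a` for `a f = 0`.
Since `(f + a)(e + b) = a + b`, it follows that `Δ` is additive on pairs `a ∈ Re`, `b ∈ fR`. For `c ∈ fR`
the products `c x₁₁`, `c y₁₁` are such a pair, so expanding `Δ (c (x₁₁ + y₁₁))` shows that the defect
`T = Δ (x₁₁ + y₁₁) - Δ x₁₁ - Δ y₁₁ ∈ eRe` satisfies `T · r f = 0` for all `r`, and `T = 0` by (M3).
-/

section

variable {R : Type*} [Ring R] [StarRing R]

def IsStarReverseDerivable (Δ : R → R) : Prop :=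
  ∀ a b : R, Δ (a * b) = Δ b * star a + star b * Δ a

namespace IsStarReverseDerivable

variable {Δ : R → R} {p : R}

theorem map_zero (hΔ : IsStarReverseDerivable Δ) : Δ 0 = 0 := by
  simpa using hΔ 0 0

theorem star_map_star (hΔ : IsStarReverseDerivable Δ) :
    IsStarReverseDerivable fun x => star (Δ (star x)) := by
  intro a b
  simp only [star_mul, hΔ (star b) (star a), star_add, star_star]
  abel

theorem map_mul_eq_self (hΔ : IsStarReverseDerivable Δ) (hp : IsSelfAdjoint p) (hΔp : Δ p = 0)
    {z : R} (hz : p * z = z) : Δ z * p = Δ z := by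
  simpa [hz, hp.star_eq, hΔp] using (hΔ p z).symm

theorem mul_map_eq_self (hΔ : IsStarReverseDerivable Δ) (hp : IsSelfAdjoint p) (hΔp : Δ p = 0)
    {z : R} (hz : z * p = z) : p * Δ z = Δ z := by
  simpa [hz, hp.star_eq, hΔp] using (hΔ z p).symm

theorem map_mul_eq_zero (hΔ : IsStarReverseDerivable Δ) (hp : IsSelfAdjoint p) (hΔp : Δ p = 0)
    {z : R} (hz : p * z = 0) : Δ z * p = 0 := by
  simpa [hz, hp.star_eq, hΔp, hΔ.map_zero] using (hΔ p z).symm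

theorem mul_map_eq_zero (hΔ : IsStarReverseDerivable Δ) (hp : IsSelfAdjoint p) (hΔp : Δ p = 0)
    {z : R} (hz : z * p = 0) : p * Δ z = 0 := by
  simpa [hz, hp.star_eq, hΔp, hΔ.map_zero] using (hΔ z p).symm

theorem map_one_sub (hΔ : IsStarReverseDerivable Δ) (hp : IsStarProjection p) (hΔp : Δ p = 0) :
    Δ (1 - p) = 0 := by
  have hright : Δ (1 - p) * p = 0 :=
    hΔ.map_mul_eq_zero hp.isSelfAdjoint hΔp hp.mul_one_sub_self
  have hleft : p * Δ (1 - p) = 0 :=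
    hΔ.mul_map_eq_zero hp.isSelfAdjoint hΔp hp.one_sub_mul_self
  have h := hΔ (1 - p) (1 - p)
  rw [hp.one_sub.isIdempotentElem.eq, hp.one_sub.isSelfAdjoint.star_eq, mul_sub, sub_mul,
    hright, hleft, mul_one, one_mul, sub_zero] at h
  simpa using h

theorem map_add_of_mul_eq_zero_left (hM1 : ∀ x : R, (∀ r : R, x * r = 0) → x = 0)
    (hΔ : IsStarReverseDerivable Δ) (hp : IsStarProjection p) (hΔp : Δ p = 0)
    {b : R} (hb : p * b = 0) : Δ (p + b) = Δ b := by
  have hps := hp.isSelfAdjoint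
  have hUp : (Δ (p + b) - Δ b) * p = 0 := by
    have h := hΔ p (p + b)
    rw [mul_add, hp.isIdempotentElem.eq, hb, add_zero, hΔp, mul_zero, add_zero, hps.star_eq] at h
    rw [sub_mul, ← h, hΔ.map_mul_eq_zero hps hΔp hb, sub_zero]
  have hUc : ∀ c : R, c * p = 0 → (Δ (p + b) - Δ b) * star c = 0 := by
    intro c hc
    have h := hΔ c (p + b)
    rw [mul_add, hc, zero_add, hΔ c b, star_add, hps.star_eq, add_mul,
      hΔ.mul_map_eq_zero hps hΔp hc, zero_add] at h
    rw [sub_mul, add_right_cancel h, sub_self]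
  refine sub_eq_zero.mp (hM1 _ fun r => ?_)
  have hc : star r * (1 - p) * p = 0 := by rw [mul_assoc, hp.one_sub_mul_self, mul_zero]
  calc (Δ (p + b) - Δ b) * r = (Δ (p + b) - Δ b) * ((1 - p) * r) := by
        rw [sub_mul (1 : R), mul_sub, one_mul, ← mul_assoc _ p, hUp, zero_mul, sub_zero]
    _ = 0 := by
        simpa [star_mul, hps.star_eq] using hUc _ hc

theorem map_add_of_mul_eq_zero_right (hM1 : ∀ x : R, (∀ r : R, x * r = 0) → x = 0)
    (hΔ : IsStarReverseDerivable Δ) (hp : IsStarProjection p) (hΔp : Δ p = 0)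
    {b : R} (hb : b * p = 0) : Δ (p + b) = Δ b := by
  have hb' : p * star b = 0 := by simpa [hp.isSelfAdjoint.star_eq] using congr_arg star hb
  have h := hΔ.star_map_star.map_add_of_mul_eq_zero_left hM1 hp
    (by rw [hp.isSelfAdjoint.star_eq, hΔp, star_zero]) hb'
  simpa [hp.isSelfAdjoint.star_eq] using h

theorem map_add_of_mul_eq_self_of_mul_eq_zero (hM1 : ∀ x : R, (∀ r : R, x * r = 0) → x = 0)
    (hΔ : IsStarReverseDerivable Δ) (hp : IsStarProjection p) (hΔp : Δ p = 0)
    {a b : R} (ha : a * p = a) (hb : p * b = 0) : Δ (a + b) = Δ a + Δ b := by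
  have hps := hp.isSelfAdjoint
  have hfactor : (1 - p + a) * (p + b) = a + b := by
    rw [add_mul, mul_add, mul_add, hp.one_sub_mul_self, sub_mul, one_mul, hb, sub_zero, ha,
      ← ha, mul_assoc, hb, mul_zero, zero_add, add_zero, add_comm]
  have hΔa : Δ (1 - p + a) = Δ a := hΔ.map_add_of_mul_eq_zero_right hM1 hp.one_sub
    (hΔ.map_one_sub hp hΔp) (by rw [mul_sub, mul_one, ha, sub_self])
  have hΔb : Δ (p + b) = Δ b := hΔ.map_add_of_mul_eq_zero_left hM1 hp hΔp hb
  have hstar_a : star a = p * star a := by simpa [hps.star_eq] using congr_arg star ha.symm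
  have hstar_b : star b * p = 0 := by simpa [hps.star_eq] using congr_arg star hb
  have hbp : Δ b * p = 0 := hΔ.map_mul_eq_zero hps hΔp hb
  have hpa : p * Δ a = Δ a := hΔ.mul_map_eq_self hps hΔp ha
  have hba : Δ b * star a = 0 := by rw [hstar_a, ← mul_assoc, hbp, zero_mul]
  have hab : star b * Δ a = 0 := by rw [← hpa, ← mul_assoc, hstar_b, zero_mul]
  calc Δ (a + b) = Δ b * (1 - p + star a) + (p + star b) * Δ a := by
        rw [← hfactor, hΔ, hΔa, hΔb, star_add, star_add, hp.one_sub.isSelfAdjoint.star_eq,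
          hps.star_eq]
    _ = Δ a + Δ b := by
        rw [mul_add, mul_sub, mul_one, hbp, sub_zero, hba, add_zero, add_mul, hpa, hab, add_zero,
          add_comm]

theorem map_add_sub_mul_star_eq_zero (hM1 : ∀ x : R, (∀ r : R, x * r = 0) → x = 0)
    (hΔ : IsStarReverseDerivable Δ) (hp : IsStarProjection p) (hΔp : Δ p = 0)
    {x y c : R} (hx : x * p = x) (hc : p * c = 0) :
    (Δ (x + y) - Δ x - Δ y) * star c = 0 := by
  have hadd : Δ (c * x + c * y) = Δ (c * x) + Δ (c * y) :=
    hΔ.map_add_of_mul_eq_self_of_mul_eq_zero hM1 hp hΔp (by rw [mul_assoc, hx])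
      (by rw [← mul_assoc, hc, zero_mul])
  rw [← mul_add, hΔ, hΔ, hΔ, star_add] at hadd
  rw [sub_mul, sub_mul, sub_sub, sub_eq_zero]
  refine add_right_cancel (b := (star x + star y) * Δ c) ?_
  rw [hadd, add_mul]
  abel

theorem map_add_of_mem_corner (hM1 : ∀ x : R, (∀ r : R, x * r = 0) → x = 0)
    (hM3 : ∀ x : R, (∀ r : R, p * x * p * r * (1 - p) = 0) → p * x * p = 0)
    (hΔ : IsStarReverseDerivable Δ) (hp : IsStarProjection p) (hΔp : Δ p = 0)
    {x y : R} (hx₁ : p * x = x) (hx₂ : x * p = x) (hy₁ : p * y = y) (hy₂ : y * p = y) :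
    Δ (x + y) = Δ x + Δ y := by
  have hps := hp.isSelfAdjoint
  set T := Δ (x + y) - Δ x - Δ y
  have hTp : T * p = T := by
    simp only [T, sub_mul, hΔ.map_mul_eq_self hps hΔp hx₁, hΔ.map_mul_eq_self hps hΔp hy₁,
      hΔ.map_mul_eq_self hps hΔp (show p * (x + y) = x + y by rw [mul_add, hx₁, hy₁])]
  have hpT : p * T = T := by
    simp only [T, mul_sub, hΔ.mul_map_eq_self hps hΔp hx₂, hΔ.mul_map_eq_self hps hΔp hy₂,
      hΔ.mul_map_eq_self hps hΔp (show (x + y) * p = x + y by rw [add_mul, hx₂, hy₂])]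
  have hT : T = 0 := by
    rw [← hTp, ← hpT, hM3 T fun r => ?_]
    have hc : p * ((1 - p) * star r) = 0 := by rw [← mul_assoc, hp.mul_one_sub_self, zero_mul]
    have h := hΔ.map_add_sub_mul_star_eq_zero hM1 hp hΔp (y := y) hx₂ hc
    simpa [star_mul, hps.star_eq, hpT, hTp, mul_assoc] using h
  rw [← sub_eq_zero, ← sub_sub]
  exact hT

end IsStarReverseDerivable

end

theorem delta_additive_on_R11_general {R : Type*} [Ring R]
    (σ : R → R)
    (hσadd : ∀ x y : R, σ (x + y) = σ x + σ y)
    (hσinv : ∀ x : R, σ (σ x) = x)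
    (hσmul : ∀ x y : R, σ (x * y) = σ y * σ x)
    (e : R) (he : e * e = e) (hes : σ e = e)
    (hM1 : ∀ x : R, (∀ r : R, x * r = 0) → x = 0)
    (hM3 : ∀ x : R, (∀ r : R, e * x * e * r * (1 - e) = 0) → e * x * e = 0)
    (Δ : R → R)
    (hΔ : ∀ a b : R, Δ (a * b) = Δ b * σ a + σ b * Δ a)
    (hΔe : Δ e = 0) :
    ∀ x₁₁ y₁₁ : R, x₁₁ = e * x₁₁ * e → y₁₁ = e * y₁₁ * e →
      Δ (x₁₁ + y₁₁) = Δ x₁₁ + Δ y₁₁ := by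
  let : StarRing R :=
    { star := σ, star_involutive := hσinv, star_mul := hσmul, star_add := hσadd }
  have hcorner : ∀ z : R, z = e * z * e → e * z = z ∧ z * e = z := fun z hz =>
    ⟨by rw [hz, ← mul_assoc, ← mul_assoc, he], by rw [hz, mul_assoc, he]⟩
  intro x y hx hy
  obtain ⟨hx₁, hx₂⟩ := hcorner x hx
  obtain ⟨hy₁, hy₂⟩ := hcorner y hy
  exact IsStarReverseDerivable.map_add_of_mem_corner hM1 hM3 hΔ ⟨he, hes⟩ hΔe hx₁ hx₂ hy₁ hy₂

theorem delta_additive_on_R11 {R : Type*} [Ring R]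
    (σ : R → R)
    (hσadd : ∀ x y : R, σ (x + y) = σ x + σ y)
    (hσinv : ∀ x : R, σ (σ x) = x)
    (hσmul : ∀ x y : R, σ (x * y) = σ y * σ x)
    (e : R) (he : e * e = e) (hes : σ e = e) (he0 : e ≠ 0) (he1 : e ≠ 1)
    (hM1 : ∀ x : R, (∀ r : R, x * r = 0) → x = 0)
    (hM3 : ∀ x : R, (∀ r : R, e * x * e * r * (1 - e) = 0) → e * x * e = 0)
    (Δ : R → R)
    (hΔ : ∀ a b : R, Δ (a * b) = Δ b * σ a + σ b * Δ a)
    (hΔe : Δ e = 0) :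
    ∀ x₁₁ y₁₁ : R, x₁₁ = e * x₁₁ * e → y₁₁ = e * y₁₁ * e →
      Δ (x₁₁ + y₁₁) = Δ x₁₁ + Δ y₁₁ :=
  delta_additive_on_R11_general σ hσadd hσinv hσmul e he hes hM1 hM3 Δ hΔ hΔe
end
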